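/- For any prime p, any j ≥ 1, and any positive integers k and m, the formal power series f_m^{p^j k} and f_{pm}^{p^{j−1} k} are congruent coefficientwise modulo p^j. -/

import Mathlib

/-- `f r = ∏_{k ≥ 1} (1 - q^(r k))` as a formal power series over ℤ.
The `n`-th coefficient is computed from the finite partial product
`∏_{k=1}^{n} (1 - q^(r k))`, which already has the correct coefficient of `q^n`. -/
noncomputable def f (r : ℕ) : PowerSeries ℤ :=
  PowerSeries.mk fun n =>
    PowerSeries.coeff n
      (∏ k ∈ Finset.range n, (1 - (PowerSeries.X : PowerSeries ℤ) ^ (r * (k + 1))))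

/-!
Reducing mod `p`, Frobenius turns each factor `1 - q^(m k)` of `f m` into `1 - q^(p m k)`, so
`f m ^ p ≡ f (p m) (mod p)`. Raising a congruence mod `p` to the power `p^(j-1)` upgrades it to a
congruence mod `p^j`. Since `f` is defined coefficientwise, the Frobenius step is carried out on
the finite partial products, which agree with `f` below any given degree.
-/

open PowerSeries Finset

namespace PowerSeries

theorem C_dvd_iff_dvd_coeff {R : Type*} [CommSemiring R] (r : R) (φ : R⟦X⟧) :
    C r ∣ φ ↔ ∀ n, r ∣ coeff n φ := by
  constructor
  · rintro ⟨ψ, rfl⟩ n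
    rw [coeff_C_mul]
    exact dvd_mul_right r _
  · intro h
    choose c hc using h
    exact ⟨mk c, ext fun n => by rw [coeff_C_mul, coeff_mk, hc]⟩

theorem coeff_eq_of_X_pow_dvd_sub {R : Type*} [CommRing R] {n : ℕ} {φ ψ : R⟦X⟧}
    (h : X ^ (n + 1) ∣ φ - ψ) : coeff n φ = coeff n ψ :=
  sub_eq_zero.1 <| by rw [← map_sub]; exact X_pow_dvd_iff.1 h n n.lt_succ_self

theorem natCast_dvd_iff_map_zmod_eq_zero (p : ℕ) (φ : ℤ⟦X⟧) :
    (p : ℤ⟦X⟧) ∣ φ ↔ map (Int.castRingHom (ZMod p)) φ = 0 := by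
  rw [← map_natCast C, C_dvd_iff_dvd_coeff, PowerSeries.ext_iff]
  simp only [coeff_map, map_zero, eq_intCast, ZMod.intCast_zmod_eq_zero_iff_dvd]

end PowerSeries

noncomputable def fPartial (r N : ℕ) : ℤ⟦X⟧ :=
  ∏ k ∈ range N, (1 - X ^ (r * (k + 1)))

theorem coeff_f (r n : ℕ) : coeff n (f r) = coeff n (fPartial r n) :=
  coeff_mk _ _

theorem coeff_fPartial_of_le {r n N : ℕ} (hr : 0 < r) (h : n ≤ N) :
    coeff n (fPartial r N) = coeff n (fPartial r n) := by
  induction N, h using Nat.le_induction with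
  | base => rfl
  | succ N hnN ih =>
    have hlt : n < r * (N + 1) := by nlinarith
    rw [fPartial, prod_range_succ, mul_sub, mul_one, map_sub, coeff_mul_X_pow',
      if_neg hlt.not_ge, sub_zero, ← ih, fPartial]

theorem X_pow_dvd_f_sub_fPartial {r : ℕ} (hr : 0 < r) (n : ℕ) :
    X ^ (n + 1) ∣ f r - fPartial r (n + 1) :=
  X_pow_dvd_iff.2 fun i hi => by
    rw [map_sub, coeff_f, coeff_fPartial_of_le hr hi.le, sub_self]

theorem map_fPartial_pow_prime {p : ℕ} (hp : p.Prime) (m N : ℕ) :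
    map (Int.castRingHom (ZMod p)) (fPartial m N) ^ p =
      map (Int.castRingHom (ZMod p)) (fPartial (p * m) N) := by
  have := Fact.mk hp
  have : CharP (ZMod p)⟦X⟧ p := charP_of_injective_ringHom C_injective p
  simp only [fPartial, map_prod, map_sub, map_one, map_pow, map_X, ← prod_pow, sub_pow_char,
    one_pow, ← pow_mul]
  exact prod_congr rfl fun k _ => by ring_nf

theorem natCast_dvd_f_pow_prime_sub {p m : ℕ} (hp : p.Prime) (hm : 0 < m) :
    (p : ℤ⟦X⟧) ∣ f m ^ p - f (p * m) := by
  set P := fPartial m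
  set Q := fPartial (p * m)
  have hPQ (N : ℕ) : (p : ℤ⟦X⟧) ∣ P N ^ p - Q N := by
    rw [natCast_dvd_iff_map_zmod_eq_zero, map_sub, map_pow, map_fPartial_pow_prime hp, sub_self]
  rw [← map_natCast C, C_dvd_iff_dvd_coeff]
  intro n
  have htrunc : X ^ (n + 1) ∣ (f m ^ p - f (p * m)) - (P (n + 1) ^ p - Q (n + 1)) := by
    rw [sub_sub_sub_comm]
    exact dvd_sub ((X_pow_dvd_f_sub_fPartial hm n).trans (sub_dvd_pow_sub_pow _ _ _))
      (X_pow_dvd_f_sub_fPartial (Nat.mul_pos hp.pos hm) n)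
  rw [coeff_eq_of_X_pow_dvd_sub htrunc]
  exact (C_dvd_iff_dvd_coeff _ _).1 (by rw [map_natCast]; exact hPQ (n + 1)) n

theorem f_pow_congr_mod_prime_pow_general (p j k m : ℕ) (hp : p.Prime) (hj : 1 ≤ j)
    (hm : 0 < m) :
    ∀ n : ℕ, (p : ℤ) ^ j ∣
      PowerSeries.coeff n (f m ^ (p ^ j * k) - f (p * m) ^ (p ^ (j - 1) * k)) := by
  obtain ⟨i, rfl⟩ : ∃ i, j = i + 1 := ⟨j - 1, by omega⟩
  have hbase : (p : ℤ⟦X⟧) ∣ (f m ^ p) ^ k - f (p * m) ^ k :=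
    (natCast_dvd_f_pow_prime_sub hp hm).trans (sub_dvd_pow_sub_pow _ _ _)
  have hexp₁ : f m ^ (p ^ (i + 1) * k) = ((f m ^ p) ^ k) ^ p ^ i := by
    rw [← pow_mul, ← pow_mul]
    ring_nf
  have hexp₂ : f (p * m) ^ (p ^ i * k) = (f (p * m) ^ k) ^ p ^ i := by
    rw [← pow_mul, mul_comm k]
  intro n
  rw [Nat.add_sub_cancel, hexp₁, hexp₂]
  refine (C_dvd_iff_dvd_coeff _ _).1 ?_ n
  simpa only [map_pow, map_natCast] using dvd_sub_pow_of_dvd_sub hbase i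

theorem f_pow_congr_mod_prime_pow (p j k m : ℕ) (hp : p.Prime) (hj : 1 ≤ j)
    (hk : 0 < k) (hm : 0 < m) :
    ∀ n : ℕ, (p : ℤ) ^ j ∣
      PowerSeries.coeff n (f m ^ (p ^ j * k) - f (p * m) ^ (p ^ (j - 1) * k)) :=
  f_pow_congr_mod_prime_pow_general p j k m hp hj hm
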